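/- arXiv:1311.2849 — 2 statements merged into one kernel-verified Lean document; each statement's English description precedes it below -/
import Mathlib

section
/- Let C be an n×n matrix over a commutative ring such that the sum of entries in each row is zero and the sum of entries in each column is zero. Then all (n−1)×(n−1) minors of C are equal up to sign; more precisely, the (i,j) cofactor (−1)^{i+j} det(C with row i and column j deleted) is independent of i and j. -/
/-!
The `(i, j)` cofactor of `C` is the entry `adjugate C j i`, i.e. the determinant of `C` with row
`i` replaced by the basis vector `e j`. By linearity in that row, the difference of the cofactors
at `(i, j)` and `(i, l)` is the determinant of `C` with row `i` replaced by `e j - e l`; this matrix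
still has zero row sums, so it kills the all-ones vector and its determinant vanishes. Hence the
cofactors do not depend on the column, and, applying this to `Cᵀ`, not on the row either.
-/

open Matrix

namespace Matrix

variable {ι R : Type*} [Fintype ι] [DecidableEq ι] [CommRing R]

theorem det_eq_zero_of_sum_row_eq_zero {A : Matrix ι ι R} (hrow : ∀ i, ∑ j, A i j = 0) (i : ι) :
    A.det = 0 := by
  have hker : A *ᵥ 1 = 0 := by
    ext p
    simpa [mulVec, dotProduct] using hrow p
  exact det_eq_zero_of_mulVec_eq_zero_of_mem_nonZeroDivisors hker (i := i) (one_mem _)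

theorem adjugate_apply_eq_of_sum_row_eq_zero {A : Matrix ι ι R} (hrow : ∀ i, ∑ j, A i j = 0)
    (i j l : ι) : adjugate A j i = adjugate A l i := by
  have hsum : ∀ p, ∑ q, A.updateRow i (Pi.single j 1 - Pi.single l 1) p q = 0 := by
    intro p
    rcases eq_or_ne p i with rfl | hp
    · simp [Finset.sum_sub_distrib]
    · simpa [updateRow_ne hp] using hrow p
  have hdiff : (A.updateRow i (Pi.single j 1 - Pi.single l 1)).det = 0 :=
    det_eq_zero_of_sum_row_eq_zero hsum i
  rw [adjugate_apply, adjugate_apply,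
    ← sub_add_cancel (Pi.single j 1 : ι → R) (Pi.single l 1), det_updateRow_add, hdiff, zero_add]

theorem adjugate_apply_eq_of_sum_col_eq_zero {A : Matrix ι ι R} (hcol : ∀ j, ∑ i, A i j = 0)
    (i k j : ι) : adjugate A j i = adjugate A j k := by
  simpa [← adjugate_transpose] using
    adjugate_apply_eq_of_sum_row_eq_zero (A := Aᵀ) hcol j i k

end Matrix

/-- For a pseudostochastic (zero row sums and zero column sums) square
matrix `C`, the `(i,j)` cofactor `(-1)^(i+j) * det(C with row i and column j deleted)`
is independent of `i` and `j`. -/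
theorem pseudostochastic_cofactor_independent
    {R : Type*} [CommRing R] {n : ℕ} (C : Matrix (Fin (n + 1)) (Fin (n + 1)) R)
    (hrow : ∀ i, ∑ j, C i j = 0) (hcol : ∀ j, ∑ i, C i j = 0)
    (i j k l : Fin (n + 1)) :
    (-1 : R) ^ ((i : ℕ) + (j : ℕ)) * (C.submatrix i.succAbove j.succAbove).det =
      (-1 : R) ^ ((k : ℕ) + (l : ℕ)) * (C.submatrix k.succAbove l.succAbove).det := by
  rw [← adjugate_fin_succ_eq_det_submatrix, ← adjugate_fin_succ_eq_det_submatrix,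
    adjugate_apply_eq_of_sum_row_eq_zero hrow i j l,
    adjugate_apply_eq_of_sum_col_eq_zero hcol i k l]
end

section
/- Let C be an n×n matrix over a commutative ring with zero row sums and zero column sums, and let C' be its adjugate (the matrix of cofactors transposed). Then all entries of C' are equal. -/
open Matrix Finset

namespace Matrix

variable {n R : Type*} [Fintype n] [DecidableEq n] [CommRing R]

theorem det_eq_zero_of_sum_row_eq_zero_s1 {M : Matrix n n R} (h : ∀ i, ∑ j, M i j = 0)
    (i : n) : M.det = 0 := by
  refine det_eq_zero_of_mulVec_eq_zero_of_mem_nonZeroDivisors (v := 1) ?_ (i := i) (one_mem _)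
  ext a
  simpa [mulVec, dotProduct] using h a

/-- `adjugate C i j` is `det C` with row `j` replaced by `Pi.single i 1`; replacing it by
`Pi.single i 1 - Pi.single k 1` instead keeps all row sums zero, so the difference vanishes. -/
theorem adjugate_apply_eq_of_sum_row_eq_zero_s1 {C : Matrix n n R}
    (h : ∀ i, ∑ j, C i j = 0) (i k j : n) : C.adjugate i j = C.adjugate k j := by
  have hdiff : (C.updateRow j (Pi.single i 1 - Pi.single k 1)).det = 0 := by
    refine det_eq_zero_of_sum_row_eq_zero_s1 (fun a => ?_) i
    by_cases ha : a = j
    · subst ha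
      simp [sum_sub_distrib]
    · simpa [updateRow_ne ha] using h a
  rw [adjugate_apply, adjugate_apply, ← sub_add_cancel (Pi.single i 1) (Pi.single k 1),
    det_updateRow_add, hdiff, zero_add]

theorem adjugate_apply_eq_of_sum_col_eq_zero_s1 {C : Matrix n n R}
    (h : ∀ j, ∑ i, C i j = 0) (i j l : n) : C.adjugate i j = C.adjugate i l := by
  rw [← transpose_apply C.adjugate, ← transpose_apply C.adjugate, adjugate_transpose]
  exact adjugate_apply_eq_of_sum_row_eq_zero_s1 h j l i

end Matrix

/-- The adjugate of a pseudostochastic matrix (zero row sums and zero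
column sums) has all entries equal. -/
theorem pseudostochastic_adjugate_entries_equal
    {R : Type*} [CommRing R] {n : ℕ} (C : Matrix (Fin n) (Fin n) R)
    (hrow : ∀ i, ∑ j, C i j = 0) (hcol : ∀ j, ∑ i, C i j = 0)
    (i j k l : Fin n) :
    C.adjugate i j = C.adjugate k l :=
  (adjugate_apply_eq_of_sum_row_eq_zero_s1 hrow i k j).trans
    (adjugate_apply_eq_of_sum_col_eq_zero_s1 hcol k j l)
end
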